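/- arXiv:2110.08543 — 2 statements merged into one kernel-verified Lean document; each statement's English description precedes it below -/
import Mathlib

section
/- Let 1 ≤ q < ∞ and 0 < p ≤ q. If 0 ≤ ε ≤ t₁ then E(W^T_q, I_{ε,p}) = E(W^T_q, I_{ε,p}, id) = ε, where id is the identity method Φ(a) = a; and if ε > t₁ then E(W^T_q, I_{ε,p}) = E(W^T_q, I_{ε,p}, Φ*_0) = t₁. -/
open scoped ENNReal NNReal BigOperators

/-- The `ℓ_q` (quasi-)norm `(∑ |x_k|^q)^{1/q}` of a complex sequence, valued in `ℝ≥0∞`. -/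
noncomputable def lqNorm (q : ℝ) (x : ℕ → ℂ) : ℝ≥0∞ :=
  (∑' k, (‖x k‖₊ : ℝ≥0∞) ^ q) ^ (1 / q)

/-- The class `W^T_q = {Th : h ∈ ℓ_q, ‖h‖_q ≤ 1}`, where `T` is the diagonal operator
determined by the sequence `t` (0-based indexing: `t k` is the paper's `t_{k+1}`). -/
def WT (q : ℝ) (t : ℕ → ℝ) : Set (ℕ → ℂ) :=
  {x | ∃ h : ℕ → ℂ, (∀ k, x k = (t k : ℂ) * h k) ∧ lqNorm q h ≤ 1}

/-- The error `E(W, I, Φ) = sup_{x ∈ W} sup_{a ∈ I x} ‖x - Φ a‖_q` of a recovery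
method `Φ`, measured in `ℓ_q`. -/
noncomputable def recErr {Z : Type*} (q : ℝ) (W : Set (ℕ → ℂ))
    (I : (ℕ → ℂ) → Set Z) (Φ : Z → ℕ → ℂ) : ℝ≥0∞ :=
  ⨆ x ∈ W, ⨆ a ∈ I x, lqNorm q (fun k => x k - Φ a k)

/-- The error of optimal recovery `E(W, I) = inf_Φ E(W, I, Φ)`. -/
noncomputable def optErr {Z : Type*} (q : ℝ) (W : Set (ℕ → ℂ))
    (I : (ℕ → ℂ) → Set Z) : ℝ≥0∞ :=
  ⨅ Φ : Z → ℕ → ℂ, recErr q W I Φ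

/-- The method `Φ*_m(a) = (a_1(1 − t_{m+1}^q/t_1^q), …, a_m(1 − t_{m+1}^q/t_m^q), 0, …)`
for information consisting of the first `n` coordinates (0-based: `t m` is the paper's
`t_{m+1}`); `PhiStar q t n 0` is the zero method `Φ*_0`. -/
noncomputable def PhiStar (q : ℝ) (t : ℕ → ℝ) (n m : ℕ) (a : Fin n → ℂ) : ℕ → ℂ :=
  fun k => if h : k < n ∧ k < m then ((1 - t m ^ q / t k ^ q : ℝ) : ℂ) * a ⟨k, h.1⟩ else 0

/-- The information mapping `I_{ε,p}(x) = x + B[ε, ℓ_p] = {a : ‖x − a‖_{ℓ_p} ≤ ε}`. -/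
def infoLpFull (p ε : ℝ) (x : ℕ → ℂ) : Set (ℕ → ℂ) :=
  {a | lqNorm p (fun k => x k - a k) ≤ ENNReal.ofReal ε}

/-!
The identity method errs by at most `ε` because `‖·‖_q ≤ ‖·‖_p` for `p ≤ q`, and the zero
method errs by at most `t₁` because `‖Th‖_q ≤ t₁ ‖h‖_q`. Conversely, for `0 ≤ c ≤ min ε t₁` the
two elements `±c e₁` of `W^T_q` both admit the information `0`, and whatever a method returns
on `0` lies at distance at least `c` from one of them. Taking `c = ε`, resp. `c = t₁`, matches
the upper bounds.
-/

section LqNorm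

variable {p q : ℝ}

lemma lqNorm_eq_tsum_enorm (q : ℝ) (x : ℕ → ℂ) :
    lqNorm q x = (∑' k, ‖x k‖ₑ ^ q) ^ (1 / q) :=
  rfl

lemma lqNorm_rpow (hq : 0 < q) (x : ℕ → ℂ) : lqNorm q x ^ q = ∑' k, ‖x k‖ₑ ^ q := by
  rw [lqNorm_eq_tsum_enorm, ← ENNReal.rpow_mul, one_div_mul_cancel hq.ne', ENNReal.rpow_one]

lemma lqNorm_le_iff (hq : 0 < q) {x : ℕ → ℂ} {c : ℝ≥0∞} :
    lqNorm q x ≤ c ↔ ∑' k, ‖x k‖ₑ ^ q ≤ c ^ q := by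
  rw [← lqNorm_rpow hq, ENNReal.rpow_le_rpow_iff hq]

lemma enorm_le_lqNorm (hq : 0 < q) (x : ℕ → ℂ) (k : ℕ) : ‖x k‖ₑ ≤ lqNorm q x := by
  rw [← ENNReal.rpow_le_rpow_iff hq, lqNorm_rpow hq]
  exact ENNReal.le_tsum k

lemma lqNorm_single (hq : 0 < q) (i : ℕ) (c : ℂ) : lqNorm q (Pi.single i c) = ‖c‖ₑ := by
  refine le_antisymm ((lqNorm_le_iff hq).2 (le_of_eq ?_)) ?_
  · rw [tsum_eq_single i fun k hk => by simp [hk, ENNReal.zero_rpow_of_pos hq]]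
    simp
  · simpa using enorm_le_lqNorm hq (Pi.single i c) i

lemma lqNorm_le_lqNorm_of_le (hp : 0 < p) (hpq : p ≤ q) (x : ℕ → ℂ) :
    lqNorm q x ≤ lqNorm p x := by
  set S := lqNorm p x
  have hqp : 0 ≤ q - p := sub_nonneg.2 hpq
  have hsplit : ∀ a : ℝ≥0∞, a ^ q = a ^ p * a ^ (q - p) := fun a => by
    rw [← ENNReal.rpow_add_of_nonneg _ _ hp.le hqp, add_sub_cancel]
  refine (lqNorm_le_iff (hp.trans_le hpq)).2 ?_
  calc ∑' k, ‖x k‖ₑ ^ q = ∑' k, ‖x k‖ₑ ^ p * ‖x k‖ₑ ^ (q - p) := by simp only [hsplit]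
    _ ≤ ∑' k, ‖x k‖ₑ ^ p * S ^ (q - p) := by
      gcongr with k
      exact enorm_le_lqNorm hp x k
    _ = S ^ q := by rw [ENNReal.tsum_mul_right, ← lqNorm_rpow hp, hsplit]

lemma lqNorm_mul_le (hq : 0 < q) {m : ℕ → ℂ} {M : ℝ≥0∞} (hm : ∀ k, ‖m k‖ₑ ≤ M)
    (h : ℕ → ℂ) : lqNorm q (fun k => m k * h k) ≤ M * lqNorm q h := by
  refine (lqNorm_le_iff hq).2 ?_
  calc ∑' k, ‖m k * h k‖ₑ ^ q = ∑' k, ‖m k‖ₑ ^ q * ‖h k‖ₑ ^ q := by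
        simp only [enorm_mul, ENNReal.mul_rpow_of_nonneg _ _ hq.le]
    _ ≤ ∑' k, M ^ q * ‖h k‖ₑ ^ q := by
      gcongr with k
      exact hm k
    _ = (M * lqNorm q h) ^ q := by
      rw [ENNReal.tsum_mul_left, ← lqNorm_rpow hq, ENNReal.mul_rpow_of_nonneg _ _ hq.le]

end LqNorm

section RecoveryError

variable {Z : Type*} {q : ℝ} {W : Set (ℕ → ℂ)} {I : (ℕ → ℂ) → Set Z}

lemma le_recErr (Φ : Z → ℕ → ℂ) {x : ℕ → ℂ} (hx : x ∈ W) {a : Z} (ha : a ∈ I x) :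
    lqNorm q (fun k => x k - Φ a k) ≤ recErr q W I Φ :=
  le_iSup₂_of_le x hx (le_iSup₂_of_le a ha le_rfl)

lemma recErr_le {Φ : Z → ℕ → ℂ} {c : ℝ≥0∞}
    (h : ∀ x ∈ W, ∀ a ∈ I x, lqNorm q (fun k => x k - Φ a k) ≤ c) : recErr q W I Φ ≤ c :=
  iSup₂_le fun x hx => iSup₂_le (h x hx)

lemma enorm_sub_le_two_mul_recErr (hq : 0 < q) (Φ : Z → ℕ → ℂ) {x y : ℕ → ℂ} (hx : x ∈ W)
    (hy : y ∈ W) {a : Z} (hax : a ∈ I x) (hay : a ∈ I y) (k : ℕ) :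
    ‖x k - y k‖ₑ ≤ 2 * recErr q W I Φ :=
  calc ‖x k - y k‖ₑ = ‖(x k - Φ a k) - (y k - Φ a k)‖ₑ := by rw [sub_sub_sub_cancel_right]
    _ ≤ ‖x k - Φ a k‖ₑ + ‖y k - Φ a k‖ₑ := enorm_sub_le
    _ ≤ recErr q W I Φ + recErr q W I Φ := by
      gcongr
      · exact (enorm_le_lqNorm hq (fun k => x k - Φ a k) k).trans (le_recErr Φ hx hax)
      · exact (enorm_le_lqNorm hq (fun k => y k - Φ a k) k).trans (le_recErr Φ hy hay)
    _ = 2 * recErr q W I Φ := (two_mul _).symm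

lemma optErr_eq_recErr_of_le {Φ : Z → ℕ → ℂ} {c : ℝ≥0∞} (hΦ : recErr q W I Φ ≤ c)
    (hc : c ≤ optErr q W I) : optErr q W I = recErr q W I Φ ∧ recErr q W I Φ = c :=
  have hopt : optErr q W I ≤ recErr q W I Φ := iInf_le (fun Φ => recErr q W I Φ) Φ
  ⟨le_antisymm hopt (hΦ.trans hc), le_antisymm hΦ (hc.trans hopt)⟩

end RecoveryError

section WT

variable {Z : Type*} {q : ℝ} {t : ℕ → ℝ}

lemma lqNorm_le_of_mem_WT (hq : 0 < q) (ht : ∀ k, 0 ≤ t k) (htmono : Antitone t)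
    {x : ℕ → ℂ} (hx : x ∈ WT q t) : lqNorm q x ≤ ENNReal.ofReal (t 0) := by
  obtain ⟨h, hxh, hh⟩ := hx
  have hT : ∀ k, ‖(t k : ℂ)‖ₑ ≤ ENNReal.ofReal (t 0) := fun k => by
    rw [← ofReal_norm, Complex.norm_real, Real.norm_of_nonneg (ht k)]
    exact ENNReal.ofReal_le_ofReal (htmono (Nat.zero_le k))
  calc lqNorm q x = lqNorm q (fun k => (t k : ℂ) * h k) := by rw [funext hxh]
    _ ≤ ENNReal.ofReal (t 0) * lqNorm q h := lqNorm_mul_le hq hT h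
    _ ≤ ENNReal.ofReal (t 0) := mul_le_of_le_one_right' hh

lemma single_mem_WT (hq : 0 < q) (ht0 : 0 < t 0) {c : ℂ} (hc : ‖c‖ ≤ t 0) :
    Pi.single 0 c ∈ WT q t := by
  have ht0' : (t 0 : ℂ) ≠ 0 := Complex.ofReal_ne_zero.2 ht0.ne'
  refine ⟨Pi.single 0 (c / t 0), fun k => ?_, ?_⟩
  · rcases eq_or_ne k 0 with rfl | hk
    · simp [mul_div_cancel₀ _ ht0']
    · simp [hk]
  · rw [lqNorm_single hq, ← ofReal_norm, norm_div, Complex.norm_real,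
      Real.norm_of_nonneg ht0.le]
    exact ENNReal.ofReal_le_one.2 ((div_le_one ht0).2 hc)

lemma recErr_zero_le_of_WT (hq : 0 < q) (ht : ∀ k, 0 ≤ t k)
    (htmono : Antitone t) (I : (ℕ → ℂ) → Set Z) :
    recErr q (WT q t) I (fun _ _ => 0) ≤ ENNReal.ofReal (t 0) :=
  recErr_le fun _ hx _ _ => by simpa using lqNorm_le_of_mem_WT hq ht htmono hx

end WT

section InfoLpFull

variable {p q ε : ℝ}

lemma recErr_id_le (hp : 0 < p) (hpq : p ≤ q) (W : Set (ℕ → ℂ)) :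
    recErr q W (infoLpFull p ε) (fun a => a) ≤ ENNReal.ofReal ε :=
  recErr_le fun _ _ _ ha => (lqNorm_le_lqNorm_of_le hp hpq _).trans ha

lemma ofReal_le_optErr_WT_infoLpFull (hq : 0 < q) (hp : 0 < p) {t : ℕ → ℝ} (ht0 : 0 < t 0)
    {c : ℝ} (hc : 0 ≤ c) (hct : c ≤ t 0) (hcε : c ≤ ε) :
    ENNReal.ofReal c ≤ optErr q (WT q t) (infoLpFull p ε) := by
  have hmem : ∀ s : ℂ, ‖s‖ = c → Pi.single 0 s ∈ WT q t ∧ 0 ∈ infoLpFull p ε (Pi.single 0 s) :=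
    fun s hs => ⟨single_mem_WT hq ht0 (hs.trans_le hct), by
      simpa [infoLpFull, lqNorm_single hp, ← ofReal_norm, hs] using
        ENNReal.ofReal_le_ofReal hcε⟩
  obtain ⟨hxW, hxI⟩ := hmem c (by simp [abs_of_nonneg hc])
  obtain ⟨hyW, hyI⟩ := hmem (-c) (by simp [abs_of_nonneg hc])
  refine le_iInf fun Φ => ?_
  have key := enorm_sub_le_two_mul_recErr hq Φ hxW hyW hxI hyI 0
  have h2c : ‖(Pi.single 0 (c : ℂ) : ℕ → ℂ) 0 - (Pi.single 0 (-c : ℂ) : ℕ → ℂ) 0‖ₑ =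
      2 * ENNReal.ofReal c := by
    rw [← ofReal_norm]
    simp [← two_mul, abs_of_nonneg hc, ENNReal.ofReal_mul]
  rw [h2c] at key
  exact (ENNReal.mul_le_mul_iff_right two_ne_zero ENNReal.ofNat_ne_top).1 key

end InfoLpFull

/-- Theorem 6: optimal recovery of `W^T_q`, `1 ≤ q < ∞`, from the whole
sequence known with an error measured in `ℓ_p`, `0 < p ≤ q`.  For `0 ≤ ε ≤ t₁` the
identity method is optimal with error `ε`; for `ε > t₁` the zero method `Φ*_0` is
optimal with error `t₁` (0-based: `t 0` is the paper's `t₁`). -/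
theorem optimal_recovery_full_lp_error_small_p
    (q : ℝ) (hq : 1 ≤ q) (p : ℝ) (hp : 0 < p) (hpq : p ≤ q)
    (t : ℕ → ℝ) (htpos : ∀ k, 0 < t k) (htmono : Antitone t)
    (ε : ℝ) (hε : 0 ≤ ε) :
    (ε ≤ t 0 →
      optErr q (WT q t) (infoLpFull p ε) =
        recErr q (WT q t) (infoLpFull p ε) (fun a => a) ∧
      recErr q (WT q t) (infoLpFull p ε) (fun a => a) = ENNReal.ofReal ε) ∧
    (t 0 < ε →
      optErr q (WT q t) (infoLpFull p ε) =
        recErr q (WT q t) (infoLpFull p ε) (fun _ _ => 0) ∧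
      recErr q (WT q t) (infoLpFull p ε) (fun _ _ => 0) = ENNReal.ofReal (t 0)) := by
  have hq0 : 0 < q := zero_lt_one.trans_le hq
  have ht0 : 0 < t 0 := htpos 0
  refine ⟨fun hεt => ?_, fun hεt => ?_⟩
  · exact optErr_eq_recErr_of_le (recErr_id_le hp hpq _)
      (ofReal_le_optErr_WT_infoLpFull hq0 hp ht0 hε hεt le_rfl)
  · exact optErr_eq_recErr_of_le (recErr_zero_le_of_WT hq0 (fun k => (htpos k).le) htmono _)
      (ofReal_le_optErr_WT_infoLpFull hq0 hp ht0 ht0.le le_rfl hεt.le)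
end

section
/- Let n ∈ ℕ, 1 < p < ∞, q = p/(p−1) and ε ≥ 0. If 1 − ε Σ_{k=1}^{n} 1/(t_k s_k) ≥ 0 set m = n; otherwise choose m ∈ {0,1,…,n} such that 1 − ε Σ_{k=1}^{m} 1/(t_k s_k) ≥ 0 and 1 − ε Σ_{k=1}^{m+1} 1/(t_k s_k) < 0. Then E(A, W^{T,S}_{p,q}, J^n_{ε,∞}) = E(A, W^{T,S}_{p,q}, J^n_{ε,∞}, Ψ*_m) = t_{m+1} s_{m+1} + ε Σ_{k=1}^{m} (1 − t_{m+1} s_{m+1}/(t_k s_k)). -/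
open scoped ENNReal NNReal BigOperators

/-- The scalar product `A(x,y) = ⟨x,y⟩ = ∑_{k=1}^∞ x_k y_k`. -/
noncomputable def scalarProd (x y : ℕ → ℂ) : ℂ := ∑' k, x k * y k

/-- The error `E(A, W₁ × W₂, J, Ψ) = sup_{(x,y)} sup_{(a,b) ∈ J(x,y)} |⟨x,y⟩ − Ψ(a,b)|`
of a recovery method `Ψ` for the scalar product. -/
noncomputable def recErrSP {Z : Type*} (W₁ W₂ : Set (ℕ → ℂ))
    (J : (ℕ → ℂ) → (ℕ → ℂ) → Set Z) (Ψ : Z → ℂ) : ℝ≥0∞ :=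
  ⨆ x ∈ W₁, ⨆ y ∈ W₂, ⨆ ab ∈ J x y, (‖scalarProd x y - Ψ ab‖₊ : ℝ≥0∞)

/-- The error of optimal recovery `E(A, W₁ × W₂, J) = inf_Ψ E(A, W₁ × W₂, J, Ψ)`. -/
noncomputable def optErrSP {Z : Type*} (W₁ W₂ : Set (ℕ → ℂ))
    (J : (ℕ → ℂ) → (ℕ → ℂ) → Set Z) : ℝ≥0∞ :=
  ⨅ Ψ : Z → ℂ, recErrSP W₁ W₂ J Ψ

/-- The method `Ψ*_m(a,b) = ∑_{k=1}^m a_k b_k (1 − t_{m+1}s_{m+1}/(t_k s_k))`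
(0-based: `t m * s m` is the paper's `t_{m+1}s_{m+1}`); `PsiStar t s n 0 = Ψ*_0 = 0`. -/
noncomputable def PsiStar (t s : ℕ → ℝ) (n m : ℕ)
    (ab : (Fin n → ℂ) × (Fin n → ℂ)) : ℂ :=
  ∑ k : Fin n, if (k : ℕ) < m then
    ab.1 k * ab.2 k * ((1 - t m * s m / (t (k : ℕ) * s (k : ℕ)) : ℝ) : ℂ) else 0

/-- The information mapping
`J^n_{ε,∞}(x,y) = {(a,b) ∈ ℂⁿ × ℂⁿ : max_{1≤k≤n} |x_k y_k − a_k b_k| ≤ ε}`. -/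
def infoProdSup (n : ℕ) (ε : ℝ) (x y : ℕ → ℂ) : Set ((Fin n → ℂ) × (Fin n → ℂ)) :=
  {ab | ∀ k : Fin n, ‖x (k : ℕ) * y (k : ℕ) - ab.1 k * ab.2 k‖ ≤ ε}

/-!
Write `τ_k = t_k s_k`. For `x = Th`, `y = Sg`, Hölder gives `∑ |h_k g_k| ≤ 1` and
`|x_k y_k| = τ_k |h_k g_k|`. With `c_k = 1 - τ_{m+1}/τ_k ∈ [0, 1]` for `k ≤ m`, split
`x_k y_k - c_k a_k b_k = c_k (x_k y_k - a_k b_k) + (1 - c_k) x_k y_k`: the first term is at most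
`ε c_k` and the second is `τ_{m+1} |h_k g_k|`. For `k > m`, `|x_k y_k| ≤ τ_{m+1} |h_k g_k|`
because `τ` is non-increasing. Summing gives the upper bound.

For the lower bound, when `|x_k y_k| ≤ ε` for `k ≤ n` the pairs `(x, y)` and `(-x, y)` share the
information `(0, 0)`, so no method can do better than `|⟨x, y⟩|`. The extremal pair is
`x_k = t_k α_k^{1/p}`, `y_k = s_k α_k^{1/q}` with `α_k = ε/τ_k` for `k ≤ m` and the remaining mass
`α_{m+1} = 1 - ε ∑_{k ≤ m} 1/τ_k`; the choice of `m` is exactly what makes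
`τ_{m+1} α_{m+1} ≤ ε`, and then `⟨x, y⟩ = τ_{m+1} + ε ∑_{k ≤ m} (1 - τ_{m+1}/τ_k)`.
-/

open MeasureTheory Finset

theorem tsum_enorm_mul_le_lqNorm_mul_lqNorm {p q : ℝ} (hpq : p.HolderConjugate q)
    (h g : ℕ → ℂ) : ∑' k, ‖h k‖ₑ * ‖g k‖ₑ ≤ lqNorm p h * lqNorm q g := by
  have hHolder := ENNReal.lintegral_mul_le_Lp_mul_Lq Measure.count hpq
    (measurable_of_countable fun k => ‖h k‖ₑ).aemeasurable
    (measurable_of_countable fun k => ‖g k‖ₑ).aemeasurable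
  simp only [Pi.mul_apply, lintegral_count] at hHolder
  exact hHolder

theorem summable_norm_mul_and_tsum_le_one {p q : ℝ} (hpq : p.HolderConjugate q)
    {h g : ℕ → ℂ} (hh : lqNorm p h ≤ 1) (hg : lqNorm q g ≤ 1) :
    Summable (fun k => ‖h k‖ * ‖g k‖) ∧ ∑' k, ‖h k‖ * ‖g k‖ ≤ 1 := by
  have hle : ∑' k, ‖h k‖ₑ * ‖g k‖ₑ ≤ 1 :=
    (tsum_enorm_mul_le_lqNorm_mul_lqNorm hpq h g).trans (mul_le_one' hh hg)
  have htoReal : (fun k => (‖h k‖ₑ * ‖g k‖ₑ).toReal) = fun k => ‖h k‖ * ‖g k‖ := by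
    simp only [ENNReal.toReal_mul, toReal_enorm]
  rw [← htoReal]
  refine ⟨ENNReal.summable_toReal (ne_top_of_le_ne_top ENNReal.one_ne_top hle), ?_⟩
  rw [← ENNReal.tsum_toReal_eq fun k => ENNReal.mul_ne_top enorm_ne_top enorm_ne_top]
  exact ENNReal.toReal_le_of_le_ofReal zero_le_one (hle.trans ENNReal.ofReal_one.ge)

theorem exists_norm_mul_eq_of_mem_WT {p q : ℝ} (hpq : p.HolderConjugate q) {t s : ℕ → ℝ}
    (ht : ∀ k, 0 ≤ t k) (hs : ∀ k, 0 ≤ s k) {x y : ℕ → ℂ} (hx : x ∈ WT p t) (hy : y ∈ WT q s) :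
    ∃ w : ℕ → ℝ, Summable w ∧ ∑' k, w k ≤ 1 ∧ ∀ k, ‖x k * y k‖ = t k * s k * w k := by
  obtain ⟨h, hxh, hh⟩ := hx
  obtain ⟨g, hyg, hg⟩ := hy
  obtain ⟨hsum, hle⟩ := summable_norm_mul_and_tsum_le_one hpq hh hg
  refine ⟨_, hsum, hle, fun k => ?_⟩
  rw [hxh, hyg, norm_mul, norm_mul, norm_mul, Complex.norm_real, Complex.norm_real,
    Real.norm_of_nonneg (ht k), Real.norm_of_nonneg (hs k)]
  ring

theorem neg_mem_WT {p : ℝ} {t : ℕ → ℝ} {x : ℕ → ℂ} (hx : x ∈ WT p t) : -x ∈ WT p t := by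
  obtain ⟨h, hxh, hh⟩ := hx
  exact ⟨-h, fun k => by simp [hxh], by simpa [lqNorm] using hh⟩

theorem rpow_mem_WT {p : ℝ} (hp : 0 < p) (t : ℕ → ℝ) {α : ℕ → ℝ} (hα : ∀ k, 0 ≤ α k)
    (hα1 : HasSum α 1) : (fun k => (t k : ℂ) * ((α k ^ (1 / p) : ℝ) : ℂ)) ∈ WT p t := by
  refine ⟨_, fun k => rfl, ?_⟩
  have hpow : ∀ k, ‖((α k ^ (1 / p) : ℝ) : ℂ)‖ₑ ^ p = ENNReal.ofReal (α k) := fun k => by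
    rw [← ofReal_norm, Complex.norm_real, Real.norm_of_nonneg (Real.rpow_nonneg (hα k) _),
      ENNReal.ofReal_rpow_of_nonneg (Real.rpow_nonneg (hα k) _) hp.le,
      ← Real.rpow_mul (hα k), one_div_mul_cancel hp.ne', Real.rpow_one]
  have htsum : ∑' k, ‖((α k ^ (1 / p) : ℝ) : ℂ)‖ₑ ^ p = 1 := by
    rw [tsum_congr hpow, ← ENNReal.ofReal_tsum_of_nonneg hα hα1.summable, hα1.tsum_eq,
      ENNReal.ofReal_one]
  show (∑' k, ‖((α k ^ (1 / p) : ℝ) : ℂ)‖ₑ ^ p) ^ (1 / p) ≤ 1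
  rw [htsum, ENNReal.one_rpow]

theorem rpow_one_div_mul_rpow_one_div {p q : ℝ} (hpq : p.HolderConjugate q) {a : ℝ}
    (ha : 0 ≤ a) : a ^ (1 / p) * a ^ (1 / q) = a := by
  have hsum : 1 / p + 1 / q = 1 := by rw [one_div, one_div, hpq.inv_add_inv_eq_one]
  rw [← Real.rpow_add' ha (by rw [hsum]; exact one_ne_zero), hsum, Real.rpow_one]

theorem enorm_scalarProd_le_recErrSP {Z : Type*} {W₁ W₂ : Set (ℕ → ℂ)}
    {J : (ℕ → ℂ) → (ℕ → ℂ) → Set Z} (Ψ : Z → ℂ) {x y : ℕ → ℂ} (hx : x ∈ W₁)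
    (hx' : -x ∈ W₁) (hy : y ∈ W₂) {z : Z} (hz : z ∈ J x y) (hz' : z ∈ J (-x) y) :
    ‖scalarProd x y‖ₑ ≤ recErrSP W₁ W₂ J Ψ := by
  have herr : ∀ x' ∈ W₁, z ∈ J x' y → ‖scalarProd x' y - Ψ z‖ₑ ≤ recErrSP W₁ W₂ J Ψ :=
    fun x' hx' hz => le_iSup₂_of_le x' hx' (le_iSup₂_of_le y hy (le_iSup₂_of_le z hz le_rfl))
  have hneg : scalarProd (-x) y = -scalarProd x y := by
    simp only [scalarProd, Pi.neg_apply, neg_mul, tsum_neg]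
  have htwo : 2 * ‖scalarProd x y‖ₑ ≤ 2 * recErrSP W₁ W₂ J Ψ := calc
    2 * ‖scalarProd x y‖ₑ = ‖(scalarProd x y - Ψ z) - (scalarProd (-x) y - Ψ z)‖ₑ := by
      rw [hneg, sub_sub_sub_cancel_right, sub_neg_eq_add, ← two_mul, enorm_mul]
      simp [← ofReal_norm]
    _ ≤ ‖scalarProd x y - Ψ z‖ₑ + ‖scalarProd (-x) y - Ψ z‖ₑ := enorm_sub_le
    _ ≤ 2 * recErrSP W₁ W₂ J Ψ := by
      rw [two_mul]; exact add_le_add (herr x hx hz) (herr (-x) hx' hz')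
  exact (ENNReal.mul_le_mul_iff_right two_ne_zero ENNReal.ofNat_ne_top).1 htwo

theorem norm_sub_mul_one_sub_div_le {f a : ℂ} {σ τ w ε : ℝ} (hτ : 0 < τ) (hσ : 0 ≤ σ)
    (hστ : σ ≤ τ) (hf : ‖f‖ = τ * w) (ha : ‖f - a‖ ≤ ε) :
    ‖f - a * ((1 - σ / τ : ℝ) : ℂ)‖ ≤ ε * (1 - σ / τ) + σ * w := by
  have hc0 : 0 ≤ 1 - σ / τ := sub_nonneg.2 (div_le_one_of_le₀ hστ hτ.le)
  have hsplit : f - a * ((1 - σ / τ : ℝ) : ℂ) =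
      (f - a) * ((1 - σ / τ : ℝ) : ℂ) + f * ((σ / τ : ℝ) : ℂ) := by
    push_cast; ring
  calc ‖f - a * ((1 - σ / τ : ℝ) : ℂ)‖
      ≤ ‖(f - a) * ((1 - σ / τ : ℝ) : ℂ)‖ + ‖f * ((σ / τ : ℝ) : ℂ)‖ := hsplit ▸ norm_add_le _ _
    _ = ‖f - a‖ * (1 - σ / τ) + τ * w * (σ / τ) := by
        rw [norm_mul, norm_mul, Complex.norm_real, Complex.norm_real, Real.norm_of_nonneg hc0,
          Real.norm_of_nonneg (div_nonneg hσ hτ.le), hf]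
    _ = ‖f - a‖ * (1 - σ / τ) + σ * w := by field_simp
    _ ≤ ε * (1 - σ / τ) + σ * w := by gcongr

theorem norm_tsum_sub_sum_le {f A : ℕ → ℂ} {τ w : ℕ → ℝ} {ε : ℝ} {m : ℕ}
    (hτ : ∀ k, 0 < τ k) (hτ_anti : Antitone τ) (hw : Summable w) (hw1 : ∑' k, w k ≤ 1)
    (hf : ∀ k, ‖f k‖ = τ k * w k) (hA : ∀ k < m, ‖f k - A k‖ ≤ ε) :
    ‖∑' k, f k - ∑ k ∈ range m, A k * ((1 - τ m / τ k : ℝ) : ℂ)‖ ≤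
      τ m + ε * ∑ k ∈ range m, (1 - τ m / τ k) := by
  have hw0 : ∀ k, 0 ≤ w k := fun k =>
    (mul_nonneg_iff_of_pos_left (hτ k)).1 (hf k ▸ norm_nonneg _)
  have hf_sum : Summable f := by
    refine Summable.of_norm_bounded (hw.mul_left (τ 0)) fun k => ?_
    rw [hf k]
    exact mul_le_mul_of_nonneg_right (hτ_anti k.zero_le) (hw0 k)
  set c : ℕ → ℝ := fun k => 1 - τ m / τ k
  set F : ℕ → ℂ := fun k => f k - if k < m then A k * (c k : ℂ) else 0
  set G : ℕ → ℝ := fun k => (if k < m then ε * c k else 0) + τ m * w k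
  have hF : HasSum F (∑' k, f k - ∑ k ∈ range m, A k * (c k : ℂ)) := by
    have hfin : HasSum (fun k => if k < m then A k * (c k : ℂ) else 0)
        (∑ k ∈ range m, if k < m then A k * (c k : ℂ) else 0) :=
      hasSum_sum_of_ne_finset_zero fun k hk => if_neg (by simpa using hk)
    rw [sum_congr rfl fun k hk => if_pos (mem_range.1 hk)] at hfin
    exact hf_sum.hasSum.sub hfin
  have hG : HasSum G (ε * ∑ k ∈ range m, c k + τ m * ∑' k, w k) := by
    have hfin : HasSum (fun k => if k < m then ε * c k else 0)
        (∑ k ∈ range m, if k < m then ε * c k else 0) :=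
      hasSum_sum_of_ne_finset_zero fun k hk => if_neg (by simpa using hk)
    rw [sum_congr rfl fun k hk => if_pos (mem_range.1 hk), ← mul_sum] at hfin
    exact hfin.add (hw.hasSum.mul_left (τ m))
  have hFG : ∀ k, ‖F k‖ ≤ G k := by
    intro k
    by_cases hk : k < m
    · simpa only [F, G, if_pos hk, add_comm (τ m * w k)] using
        norm_sub_mul_one_sub_div_le (hτ k) (hτ m).le (hτ_anti hk.le) (hf k) (hA k hk)
    · simp only [F, G, if_neg hk, sub_zero, zero_add, hf k]
      exact mul_le_mul_of_nonneg_right (hτ_anti (not_lt.1 hk)) (hw0 k)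
  calc _ ≤ ε * ∑ k ∈ range m, c k + τ m * ∑' k, w k := hF.tsum_eq ▸ tsum_of_norm_bounded hG hFG
    _ ≤ τ m + ε * ∑ k ∈ range m, c k := by nlinarith [mul_le_mul_of_nonneg_left hw1 (hτ m).le]

theorem PsiStar_eq_sum_range (t s : ℕ → ℝ) {n m : ℕ} (hmn : m ≤ n)
    (ab : (Fin n → ℂ) × (Fin n → ℂ)) :
    PsiStar t s n m ab = ∑ k ∈ range m, (if hk : k < n then ab.1 ⟨k, hk⟩ * ab.2 ⟨k, hk⟩ else 0) *
      ((1 - t m * s m / (t k * s k) : ℝ) : ℂ) := by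
  set A : ℕ → ℂ := fun k => if hk : k < n then ab.1 ⟨k, hk⟩ * ab.2 ⟨k, hk⟩ else 0
  set c : ℕ → ℂ := fun k => ((1 - t m * s m / (t k * s k) : ℝ) : ℂ)
  calc PsiStar t s n m ab = ∑ k : Fin n, if (k : ℕ) < m then A k * c k else 0 := by
        refine sum_congr rfl fun k _ => ?_
        simp only [A, c, dif_pos k.is_lt]
    _ = ∑ k ∈ range n, if k < m then A k * c k else 0 :=
        Fin.sum_univ_eq_sum_range (fun k => if k < m then A k * c k else 0) n
    _ = ∑ k ∈ range m, A k * c k := by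
        rw [← sum_range_add_sum_Ico _ hmn, sum_congr rfl fun k hk => if_pos (mem_range.1 hk),
          sum_eq_zero fun k hk => if_neg (not_lt.2 (mem_Ico.1 hk).1), add_zero]

theorem recErrSP_PsiStar_le {p q : ℝ} (hpq : p.HolderConjugate q) {t s : ℕ → ℝ}
    (ht : ∀ k, 0 < t k) (ht_anti : Antitone t) (hs : ∀ k, 0 < s k) (hs_anti : Antitone s)
    {n m : ℕ} (hmn : m ≤ n) (ε : ℝ) :
    recErrSP (WT p t) (WT q s) (infoProdSup n ε) (PsiStar t s n m) ≤
      ENNReal.ofReal (t m * s m + ε * ∑ k ∈ range m, (1 - t m * s m / (t k * s k))) := by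
  refine iSup₂_le fun x hx => iSup₂_le fun y hy => iSup₂_le fun ab hab => ?_
  obtain ⟨w, hw, hw1, hxy⟩ :=
    exists_norm_mul_eq_of_mem_WT hpq (fun k => (ht k).le) (fun k => (hs k).le) hx hy
  have hts_anti : Antitone fun k => t k * s k :=
    fun j k hjk => mul_le_mul (ht_anti hjk) (hs_anti hjk) (hs k).le (ht j).le
  have hA : ∀ k < m, ‖x k * y k - if hk : k < n then ab.1 ⟨k, hk⟩ * ab.2 ⟨k, hk⟩ else 0‖ ≤ ε :=
    fun k hk => by simpa only [dif_pos (hk.trans_le hmn)] using hab ⟨k, hk.trans_le hmn⟩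
  have key := norm_tsum_sub_sum_le (fun k => mul_pos (ht k) (hs k)) hts_anti hw hw1 hxy hA
  rw [← PsiStar_eq_sum_range t s hmn] at key
  rw [← enorm_eq_nnnorm, ← ofReal_norm]
  exact ENNReal.ofReal_le_ofReal key

noncomputable def extremalWeight (t s : ℕ → ℝ) (ε : ℝ) (m k : ℕ) : ℝ :=
  if k < m then ε / (t k * s k)
  else if k = m then 1 - ε * ∑ j ∈ range m, 1 / (t j * s j) else 0

section extremalWeight

variable {t s : ℕ → ℝ} {ε : ℝ} {m : ℕ}

theorem extremalWeight_nonneg (hts : ∀ k, 0 ≤ t k * s k) (hε : 0 ≤ ε)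
    (hr : 0 ≤ 1 - ε * ∑ j ∈ range m, 1 / (t j * s j)) (k : ℕ) :
    0 ≤ extremalWeight t s ε m k := by
  unfold extremalWeight
  split_ifs
  exacts [div_nonneg hε (hts k), hr, le_rfl]

theorem extremalWeight_eq_zero {k : ℕ} (hk : m < k) : extremalWeight t s ε m k = 0 := by
  simp [extremalWeight, hk.not_gt, hk.ne']

theorem hasSum_extremalWeight : HasSum (extremalWeight t s ε m) 1 := by
  have hfin : HasSum (extremalWeight t s ε m) (∑ k ∈ range (m + 1), extremalWeight t s ε m k) :=
    hasSum_sum_of_ne_finset_zero fun k hk =>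
      extremalWeight_eq_zero (by simpa [Nat.lt_succ_iff] using hk)
  have hlt : ∀ k ∈ range m, extremalWeight t s ε m k = ε * (1 / (t k * s k)) := fun k hk => by
    rw [extremalWeight, if_pos (mem_range.1 hk), mul_one_div]
  rwa [sum_range_succ, sum_congr rfl hlt, ← mul_sum, extremalWeight, if_neg (lt_irrefl m),
    if_pos rfl, add_sub_cancel] at hfin

theorem mul_extremalWeight (hts : ∀ k, t k * s k ≠ 0) (k : ℕ) :
    t k * s k * extremalWeight t s ε m k = if k < m then ε
      else if k = m then t m * s m * (1 - ε * ∑ j ∈ range m, 1 / (t j * s j)) else 0 := by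
  unfold extremalWeight
  split_ifs with hlt heq
  · exact mul_div_cancel₀ ε (hts k)
  · rw [heq]
  · exact mul_zero _

theorem hasSum_mul_extremalWeight (hts : ∀ k, t k * s k ≠ 0) :
    HasSum (fun k => t k * s k * extremalWeight t s ε m k)
      (t m * s m + ε * ∑ k ∈ range m, (1 - t m * s m / (t k * s k))) := by
  have hfin : HasSum (fun k => t k * s k * extremalWeight t s ε m k)
      (∑ k ∈ range (m + 1), t k * s k * extremalWeight t s ε m k) :=
    hasSum_sum_of_ne_finset_zero fun k hk => by
      rw [extremalWeight_eq_zero (by simpa [Nat.lt_succ_iff] using hk), mul_zero]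
  have hB : ∑ k ∈ range m, t m * s m / (t k * s k) =
      t m * s m * ∑ k ∈ range m, 1 / (t k * s k) := by
    simp only [mul_sum, mul_one_div]
  have hsum : ∑ k ∈ range (m + 1), t k * s k * extremalWeight t s ε m k =
      m * ε + t m * s m * (1 - ε * ∑ j ∈ range m, 1 / (t j * s j)) := by
    rw [sum_range_succ,
      sum_congr rfl fun k hk => (mul_extremalWeight hts k).trans (if_pos (mem_range.1 hk)),
      mul_extremalWeight hts, if_neg (lt_irrefl m), if_pos rfl, sum_const, card_range,
      nsmul_eq_mul]
  have hV : t m * s m + ε * ∑ k ∈ range m, (1 - t m * s m / (t k * s k)) =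
      m * ε + t m * s m * (1 - ε * ∑ j ∈ range m, 1 / (t j * s j)) := by
    rw [sum_sub_distrib, hB, sum_const, card_range, nsmul_eq_mul, mul_one]
    ring
  rwa [hV, ← hsum]

end extremalWeight

theorem ofReal_le_recErrSP {p q : ℝ} (hpq : p.HolderConjugate q) {t s : ℕ → ℝ}
    (ht : ∀ k, 0 < t k) (hs : ∀ k, 0 < s k) {ε : ℝ} (hε : 0 ≤ ε) {n m : ℕ}
    (hr : 0 ≤ 1 - ε * ∑ k ∈ range m, 1 / (t k * s k))
    (hlast : m < n → t m * s m * (1 - ε * ∑ k ∈ range m, 1 / (t k * s k)) ≤ ε)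
    (Ψ : (Fin n → ℂ) × (Fin n → ℂ) → ℂ) :
    ENNReal.ofReal (t m * s m + ε * ∑ k ∈ range m, (1 - t m * s m / (t k * s k))) ≤
      recErrSP (WT p t) (WT q s) (infoProdSup n ε) Ψ := by
  have hts : ∀ k, 0 < t k * s k := fun k => mul_pos (ht k) (hs k)
  set α := extremalWeight t s ε m
  have hα0 : ∀ k, 0 ≤ α k := extremalWeight_nonneg (fun k => (hts k).le) hε hr
  set x : ℕ → ℂ := fun k => (t k : ℂ) * ((α k ^ (1 / p) : ℝ) : ℂ)
  set y : ℕ → ℂ := fun k => (s k : ℂ) * ((α k ^ (1 / q) : ℝ) : ℂ)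
  have hx : x ∈ WT p t := rpow_mem_WT hpq.pos t hα0 hasSum_extremalWeight
  have hy : y ∈ WT q s := rpow_mem_WT hpq.symm.pos s hα0 hasSum_extremalWeight
  have hxy : ∀ k, x k * y k = ((t k * s k * α k : ℝ) : ℂ) := fun k => by
    rw [← rpow_one_div_mul_rpow_one_div hpq (hα0 k)]
    push_cast
    ring
  have hV := hasSum_mul_extremalWeight (ε := ε) (m := m) fun k => (hts k).ne'
  have hinfo : ∀ x' : ℕ → ℂ, (∀ k, ‖x' k * y k‖ = ‖x k * y k‖) →
      (0 : (Fin n → ℂ) × (Fin n → ℂ)) ∈ infoProdSup n ε x' y := by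
    intro x' hx' k
    rw [Prod.fst_zero, Prod.snd_zero, Pi.zero_apply, mul_zero, sub_zero, hx', hxy,
      Complex.norm_real, Real.norm_of_nonneg (mul_nonneg (hts k).le (hα0 k)),
      mul_extremalWeight fun k => (hts k).ne']
    split_ifs with hlt heq
    exacts [le_rfl, hlast (heq ▸ k.is_lt), hε]
  calc ENNReal.ofReal (t m * s m + ε * ∑ k ∈ range m, (1 - t m * s m / (t k * s k)))
      = ‖scalarProd x y‖ₑ := by
        rw [scalarProd, tsum_congr hxy, ← Complex.ofReal_tsum, hV.tsum_eq, ← ofReal_norm,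
          Complex.norm_real, Real.norm_of_nonneg (hV.nonneg fun k => mul_nonneg (hts k).le (hα0 k))]
    _ ≤ recErrSP (WT p t) (WT q s) (infoProdSup n ε) Ψ :=
        enorm_scalarProd_le_recErrSP Ψ hx (neg_mem_WT hx) hy (hinfo x fun k => rfl)
          (hinfo (-x) fun k => by rw [Pi.neg_apply, neg_mul, norm_neg])

theorem optimal_recovery_scalar_product_sup_error_general
    (n : ℕ) (p q : ℝ) (hp : 1 < p) (hq : q = p / (p - 1))
    (t s : ℕ → ℝ) (htpos : ∀ k, 0 < t k) (htmono : Antitone t)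
    (hspos : ∀ k, 0 < s k) (hsmono : Antitone s)
    (ε : ℝ) (hε : 0 ≤ ε) (m : ℕ)
    (hm : (1 - ε * ∑ k ∈ Finset.range n, 1 / (t k * s k) ≥ 0 ∧ m = n) ∨
      (m ≤ n ∧ 1 - ε * ∑ k ∈ Finset.range m, 1 / (t k * s k) ≥ 0 ∧
        1 - ε * ∑ k ∈ Finset.range (m + 1), 1 / (t k * s k) < 0)) :
    optErrSP (WT p t) (WT q s) (infoProdSup n ε) =
      recErrSP (WT p t) (WT q s) (infoProdSup n ε) (PsiStar t s n m) ∧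
    recErrSP (WT p t) (WT q s) (infoProdSup n ε) (PsiStar t s n m) =
      ENNReal.ofReal
        (t m * s m + ε * ∑ k ∈ Finset.range m, (1 - t m * s m / (t k * s k))) := by
  have hpq : p.HolderConjugate q := (Real.holderConjugate_iff_eq_conjExponent hp).2 hq
  obtain ⟨hmn, hr, hmlt⟩ : m ≤ n ∧ 0 ≤ 1 - ε * ∑ k ∈ range m, 1 / (t k * s k) ∧
      (m < n → t m * s m * (1 - ε * ∑ k ∈ range m, 1 / (t k * s k)) ≤ ε) := by
    rcases hm with ⟨hr, rfl⟩ | ⟨hmn, hr, hnext⟩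
    · exact ⟨le_rfl, hr, fun h => absurd h (lt_irrefl m)⟩
    · refine ⟨hmn, hr, fun _ => ?_⟩
      rw [sum_range_succ, mul_add, ← sub_sub, sub_neg, mul_one_div,
        lt_div_iff₀ (mul_pos (htpos m) (hspos m)), mul_comm] at hnext
      exact hnext.le
  have hub := recErrSP_PsiStar_le hpq htpos htmono hspos hsmono hmn ε
  have hlb := ofReal_le_recErrSP hpq htpos hspos hε hr hmlt
  exact ⟨le_antisymm (iInf_le _ _) (hub.trans (le_iInf hlb)), le_antisymm hub (hlb _)⟩

/-- optimal recovery of the scalar product on `W^{T,S}_{p,q}` from the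
first `n` coordinatewise products known with an error measured in `ℓ^n_∞`. -/
theorem optimal_recovery_scalar_product_sup_error
    (n : ℕ) (hn : 1 ≤ n) (p q : ℝ) (hp : 1 < p) (hq : q = p / (p - 1))
    (t s : ℕ → ℝ) (htpos : ∀ k, 0 < t k) (htmono : Antitone t)
    (hspos : ∀ k, 0 < s k) (hsmono : Antitone s)
    (ε : ℝ) (hε : 0 ≤ ε) (m : ℕ)
    (hm : (1 - ε * ∑ k ∈ Finset.range n, 1 / (t k * s k) ≥ 0 ∧ m = n) ∨
      (m ≤ n ∧ 1 - ε * ∑ k ∈ Finset.range m, 1 / (t k * s k) ≥ 0 ∧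
        1 - ε * ∑ k ∈ Finset.range (m + 1), 1 / (t k * s k) < 0)) :
    optErrSP (WT p t) (WT q s) (infoProdSup n ε) =
      recErrSP (WT p t) (WT q s) (infoProdSup n ε) (PsiStar t s n m) ∧
    recErrSP (WT p t) (WT q s) (infoProdSup n ε) (PsiStar t s n m) =
      ENNReal.ofReal
        (t m * s m + ε * ∑ k ∈ Finset.range m, (1 - t m * s m / (t k * s k))) :=
  optimal_recovery_scalar_product_sup_error_general n p q hp hq t s htpos htmono hspos hsmono ε hε m
    hm
end
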